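/- arXiv:2605.30558 — 3 statements merged into one kernel-verified Lean document; each statement's English description precedes it below -/
import Mathlib

section
/- Homological perturbation lemma: let (i, p, K) be a strong deformation retraction from (V, d) onto (V', d') satisfying the side conditions K² = 0, K∘i = 0, p∘K = 0, and let δ : V → V be a degree +1 map with (d + δ)² = 0 such that δ∘K is locally nilpotent (so that Σ_{k≥0} (-δK)^k converges, e.g. (δK)^N = 0 for some N). Then setting d̃' = d' + Σ_{k≥0} p(-δK)^k δ i, ĩ = Σ_{k≥0}(-Kδ)^k i, p̃ = Σ_{k≥0} p(-δK)^k, K̃ = Σ_{k≥0} K(-δK)^k, one has: (d̃')² = 0, ĩ and p̃ are chain maps for the differentials d+δ and d̃', p̃∘ĩ = id, (d+δ)K̃ + K̃(d+δ) = id - ĩ∘p̃, and the side conditions K̃² = 0, K̃∘ĩ = 0, p̃∘K̃ = 0 hold. -/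
/-!
Put `X = (1 + δK)⁻¹ δ = δ (1 + Kδ)⁻¹`. The perturbed data are the transfer formulas
`ĩ = i - KXi`, `p̃ = p - pXK`, `K̃ = K - KXK`, `d̃' = d' + pXi`, and each identity of a strong
deformation retract for them follows from the old identities and the single equation
`dX + Xd + X(ip)X = 0`. Multiplying its left side by `1 + δK` on the left and by `1 + Kδ` on the
right gives `dδ + δd + δδ = (d + δ)² - d² = 0`, so it holds. Nilpotence of `δK` only serves to
invert `1 + δK` and `1 + Kδ` by finite geometric series.
-/

open Finset

theorem geom_sum_neg_mul_one_add_of_pow_eq_zero {S : Type*} [Ring S] {x : S} {n : ℕ}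
    (hx : x ^ n = 0) : (∑ k ∈ range n, (-x) ^ k) * (1 + x) = 1 := by
  rw [← sub_neg_eq_add, geom_sum_mul_neg, neg_pow, hx, mul_zero, sub_zero]

theorem one_add_mul_geom_sum_neg_of_pow_eq_zero {S : Type*} [Ring S] {x : S} {n : ℕ}
    (hx : x ^ n = 0) : (1 + x) * ∑ k ∈ range n, (-x) ^ k = 1 := by
  rw [← sub_neg_eq_add, mul_neg_geom_sum, neg_pow, hx, mul_zero, sub_zero]

theorem pow_succ_mul_eq_zero_of_pow_mul_eq_zero {M : Type*} [MonoidWithZero M] {a b : M} {n : ℕ}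
    (h : (a * b) ^ n = 0) : (b * a) ^ (n + 1) = 0 := by
  rw [pow_succ, ← mul_assoc, mul_pow_mul, h, mul_zero, zero_mul]

theorem maurerCartan_of_perturbation {S : Type*} [Ring S] {d δ K ι X A B : S}
    (hd : d * d = 0) (hδ : (d + δ) * (d + δ) = 0) (hK : d * K + K * d = 1 - ι)
    (hX₁ : (1 + δ * K) * X = δ) (hX₂ : X * (1 + K * δ) = δ)
    (hA : A * (1 + δ * K) = 1) (hB : (1 + K * δ) * B = 1) :
    d * X + X * d + X * ι * X = 0 := by
  have hι : ι = 1 - (d * K + K * d) := by rw [hK, sub_sub_cancel]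
  have key : (1 + δ * K) * (d * X + X * d + X * ι * X) * (1 + K * δ) = 0 := calc
    _ = (1 + δ * K) * d * (X * (1 + K * δ)) + (1 + δ * K) * X * d * (1 + K * δ)
          + (1 + δ * K) * X * ι * (X * (1 + K * δ)) := by noncomm_ring
    _ = (1 + δ * K) * d * δ + δ * d * (1 + K * δ) + δ * ι * δ := by rw [hX₁, hX₂]
    _ = (d + δ) * (d + δ) - d * d := by rw [hι]; noncomm_ring
    _ = 0 := by rw [hδ, hd, sub_zero]
  calc d * X + X * d + X * ι * X
      = A * (1 + δ * K) * (d * X + X * d + X * ι * X) * ((1 + K * δ) * B) := by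
        rw [hA, hB, one_mul, mul_one]
    _ = A * ((1 + δ * K) * (d * X + X * d + X * ι * X) * (1 + K * δ)) * B := by noncomm_ring
    _ = 0 := by rw [key, mul_zero, zero_mul]

section

variable {R V V' : Type*} [Semiring R] [AddCommGroup V] [Module R V]
  [AddCommGroup V'] [Module R V']

structure IsStrongDeformationRetract (d : V →ₗ[R] V) (d' : V' →ₗ[R] V')
    (i : V' →ₗ[R] V) (p : V →ₗ[R] V') (K : V →ₗ[R] V) : Prop where
  d_comp_d : d ∘ₗ d = 0
  d'_comp_d' : d' ∘ₗ d' = 0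
  d_comp_i : d ∘ₗ i = i ∘ₗ d'
  d'_comp_p : d' ∘ₗ p = p ∘ₗ d
  p_comp_i : p ∘ₗ i = LinearMap.id
  homotopy : d ∘ₗ K + K ∘ₗ d = LinearMap.id - i ∘ₗ p
  K_comp_K : K ∘ₗ K = 0
  K_comp_i : K ∘ₗ i = 0
  p_comp_K : p ∘ₗ K = 0

namespace IsStrongDeformationRetract

variable {d δ K X : V →ₗ[R] V} {d' : V' →ₗ[R] V'} {i : V' →ₗ[R] V} {p : V →ₗ[R] V'}

theorem perturb_of_maurerCartan (h : IsStrongDeformationRetract d d' i p K)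
    (hδ : (d + δ) ∘ₗ (d + δ) = 0)
    (hX₁ : (1 + δ * K) * X = δ) (hX₂ : X * (1 + K * δ) = δ)
    (hMC : d * X + X * d + X * (i ∘ₗ p) * X = 0) :
    IsStrongDeformationRetract (d + δ) (d' + p ∘ₗ X ∘ₗ i) (i - K ∘ₗ X ∘ₗ i)
      (p - p ∘ₗ X ∘ₗ K) (K - K ∘ₗ X ∘ₗ K) := by
  obtain ⟨hd, hd', hdi, hpd, hpi, hK, hKK, hKi, hpK⟩ := h
  refine ⟨hδ, ?_, ?_, ?_, ?_, ?_, ?_, ?_, ?_⟩ <;>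
  simp only [LinearMap.ext_iff, LinearMap.comp_apply, LinearMap.add_apply, LinearMap.sub_apply,
    LinearMap.id_apply, LinearMap.zero_apply, Module.End.mul_apply, add_mul, mul_add, one_mul,
    mul_one, map_add, map_sub] at hd hd' hdi hpd hpi hK hKK hKi hpK hX₁ hX₂ hMC ⊢ <;>
  intro x
  · linear_combination (norm := (simp only [map_add, map_zero]; module))
      hd' x + hpd (X (i x)) - congr(p (X $(hdi x))) + congr(p $(hMC (i x)))
  · linear_combination (norm := (simp only [map_add, map_zero]; module))
      hdi x - hX₁ (i x) - hK (X (i x)) + congr(K $(hMC (i x))) - congr(K (X $(hdi x)))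
  · linear_combination (norm := (simp only [map_add, map_sub, map_zero]; module))
      hpd x - hpd (X (K x)) + congr(p $(hX₂ x)) + congr(p (X $(hK x))) - congr(p $(hMC (K x)))
  · simp [hpi, hpK, hKi, hKK]
  · linear_combination (norm := (simp only [map_add, map_sub, map_zero]; module))
      hK x - hX₁ (K x) - congr(K $(hX₂ x)) - hK (X (K x)) - congr(K (X $(hK x)))
        + congr(K $(hMC (K x)))
  · simp [hKK]
  · simp [hKK, hKi]
  · simp [hKK, hpK]

theorem perturb (h : IsStrongDeformationRetract d d' i p K) (hδ : (d + δ) ∘ₗ (d + δ) = 0)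
    {A B : Module.End R V} (hA : A * (1 + δ * K) = 1) (hA' : (1 + δ * K) * A = 1)
    (hB : (1 + K * δ) * B = 1) :
    IsStrongDeformationRetract (d + δ) (d' + p ∘ₗ A ∘ₗ δ ∘ₗ i) (B ∘ₗ i) (p ∘ₗ A) (K ∘ₗ A) := by
  have hAδ : A * δ = δ * B := calc
    A * δ = A * δ * ((1 + K * δ) * B) := by rw [hB, mul_one]
    _ = A * (1 + δ * K) * δ * B := by noncomm_ring
    _ = δ * B := by rw [hA, one_mul]
  have hX₁ : (1 + δ * K) * (A * δ) = δ := by rw [← mul_assoc, hA', one_mul]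
  have hX₂ : A * δ * (1 + K * δ) = δ := calc
    A * δ * (1 + K * δ) = A * (1 + δ * K) * δ := by noncomm_ring
    _ = δ := by rw [hA, one_mul]
  have hMC := maurerCartan_of_perturbation (h.d_comp_d : d * d = 0) hδ
    (h.homotopy : d * K + K * d = 1 - i ∘ₗ p) hX₁ hX₂ hA hB
  have hA_eq : A = 1 - A * δ * K := calc
    A = A * (1 + δ * K) - A * δ * K := by noncomm_ring
    _ = 1 - A * δ * K := by rw [hA]
  have hB_eq : B = 1 - K * (A * δ) := calc
    B = (1 + K * δ) * B - K * (δ * B) := by noncomm_ring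
    _ = 1 - K * (A * δ) := by rw [hB, hAδ]
  convert h.perturb_of_maurerCartan hδ hX₁ hX₂ hMC using 1
  · rfl
  · rw [hB_eq]; rfl
  · conv_lhs => rw [hA_eq, LinearMap.comp_sub]
    rfl
  · conv_lhs => rw [hA_eq, LinearMap.comp_sub]
    rfl

end IsStrongDeformationRetract

end

/-- the homological perturbation lemma.  Given a strong deformation
retraction `(i, p, K)` from `(V, d)` onto `(V', d')` with side conditions, and a
perturbation `δ` of the differential with `(d + δ)² = 0` and `(δ∘K)^N = 0` (so that the
geometric series terminate), the perturbed data `(ĩ, p̃, K̃)` and the perturbed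
differential `d̃'` again form a strong deformation retraction with side conditions. -/
theorem homological_perturbation_lemma
    {R V V' : Type*} [Field R] [AddCommGroup V] [Module R V]
    [AddCommGroup V'] [Module R V']
    (d : V →ₗ[R] V) (d' : V' →ₗ[R] V')
    (i : V' →ₗ[R] V) (p : V →ₗ[R] V') (K : V →ₗ[R] V)
    (hd : d ∘ₗ d = 0) (hd' : d' ∘ₗ d' = 0)
    (hi : d ∘ₗ i = i ∘ₗ d') (hp : d' ∘ₗ p = p ∘ₗ d)
    (hpi : p ∘ₗ i = LinearMap.id)
    (hK : d ∘ₗ K + K ∘ₗ d = LinearMap.id - i ∘ₗ p)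
    (hKK : K ∘ₗ K = 0) (hKi : K ∘ₗ i = 0) (hpK : p ∘ₗ K = 0)
    (δ : V →ₗ[R] V) (hδ : (d + δ) ∘ₗ (d + δ) = 0)
    (N : ℕ) (hN : (δ ∘ₗ K) ^ N = 0) :
    let d'new : V' →ₗ[R] V' :=
      d' + ∑ k ∈ Finset.range (N + 1), p ∘ₗ ((-(δ ∘ₗ K)) ^ k) ∘ₗ δ ∘ₗ i
    let inew : V' →ₗ[R] V :=
      ∑ k ∈ Finset.range (N + 1), ((-(K ∘ₗ δ)) ^ k) ∘ₗ i
    let pnew : V →ₗ[R] V' :=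
      ∑ k ∈ Finset.range (N + 1), p ∘ₗ ((-(δ ∘ₗ K)) ^ k)
    let Knew : V →ₗ[R] V :=
      ∑ k ∈ Finset.range (N + 1), K ∘ₗ ((-(δ ∘ₗ K)) ^ k)
    d'new ∘ₗ d'new = 0 ∧
    (d + δ) ∘ₗ inew = inew ∘ₗ d'new ∧
    d'new ∘ₗ pnew = pnew ∘ₗ (d + δ) ∧
    pnew ∘ₗ inew = LinearMap.id ∧
    (d + δ) ∘ₗ Knew + Knew ∘ₗ (d + δ) = LinearMap.id - inew ∘ₗ pnew ∧
    Knew ∘ₗ Knew = 0 ∧ Knew ∘ₗ inew = 0 ∧ pnew ∘ₗ Knew = 0 := by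
  intro d'new inew pnew Knew
  have hδK : (δ * K) ^ (N + 1) = 0 := pow_eq_zero_of_le N.le_succ hN
  have hKδ : (K * δ) ^ (N + 1) = 0 := pow_succ_mul_eq_zero_of_pow_mul_eq_zero hN
  have hretract : IsStrongDeformationRetract d d' i p K :=
    ⟨hd, hd', hi, hp, hpi, hK, hKK, hKi, hpK⟩
  obtain ⟨-, h₁, h₂, h₃, h₄, h₅, h₆, h₇, h₈⟩ := hretract.perturb hδ
    (geom_sum_neg_mul_one_add_of_pow_eq_zero hδK) (one_add_mul_geom_sum_neg_of_pow_eq_zero hδK)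
    (one_add_mul_geom_sum_neg_of_pow_eq_zero hKδ)
  have hd'new : d'new = d' + p ∘ₗ (∑ k ∈ range (N + 1), (-(δ ∘ₗ K)) ^ k) ∘ₗ δ ∘ₗ i := by
    ext x; simp [d'new, LinearMap.sum_apply, map_sum]
  have hinew : inew = (∑ k ∈ range (N + 1), (-(K ∘ₗ δ)) ^ k) ∘ₗ i := by
    ext x; simp [inew, LinearMap.sum_apply]
  have hpnew : pnew = p ∘ₗ ∑ k ∈ range (N + 1), (-(δ ∘ₗ K)) ^ k := by
    ext x; simp [pnew, LinearMap.sum_apply, map_sum]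
  have hKnew : Knew = K ∘ₗ ∑ k ∈ range (N + 1), (-(δ ∘ₗ K)) ^ k := by
    ext x; simp [Knew, LinearMap.sum_apply, map_sum]
  rw [hd'new, hinew, hpnew, hKnew]
  exact ⟨h₁, h₂, h₃, h₄, h₅, h₆, h₇, h₈⟩
end

section
/- Wick's lemma in one variable: for every real polynomial O and every ħ > 0, the value of e^{(ħ/2) d²/dx²} O at x = 0 equals the Gaussian average (2πħ)^{-1/2} ∫_{-∞}^{∞} e^{-x²/(2ħ)} O(x) dx. Here e^{(ħ/2)d²/dx²}O denotes the (finite, since O is polynomial) exponential series Σ_{k≥0} (ħ/2)^k/k! · O^{(2k)}. -/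
/-!
Both sides are linear in `O`, so it suffices to compare them coefficientwise. At `0` the
`2k`-th derivative of `O` is `(2k)! • coeff O (2k)`, while on the Gaussian side odd moments vanish
by symmetry and the even ones satisfy `∫ x^(n+2) e^{-bx²} = (n+1)/(2b) ∫ x^n e^{-bx²}` (integration
by parts), so that with `b = 1/(2ħ)` the normalized `2k`-th moment is `(2k)!/k! · (ħ/2)^k`.
-/

open MeasureTheory Real Polynomial Nat

theorem Finset.sum_range_two_mul {M : Type*} [AddCommMonoid M] (f : ℕ → M) (n : ℕ) :
    ∑ i ∈ range (2 * n), f i = ∑ i ∈ range n, (f (2 * i) + f (2 * i + 1)) := by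
  induction n with
  | zero => simp
  | succ n ih =>
    rw [Nat.mul_succ, sum_range_succ, sum_range_succ, ih, sum_range_succ, add_assoc]

theorem Polynomial.eval_zero_iterate_derivative {R : Type*} [Semiring R] (p : R[X]) (n : ℕ) :
    (derivative^[n] p).eval 0 = n ! * p.coeff n := by
  rw [← coeff_zero_eq_eval_zero, coeff_iterate_derivative, zero_add, Nat.descFactorial_self,
    nsmul_eq_mul]

theorem integral_eq_zero_of_odd {E : Type*} [NormedAddCommGroup E] [NormedSpace ℝ E]
    {f : ℝ → E} (hf : ∀ x, f (-x) = -f x) : ∫ x, f x = 0 := by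
  have h := integral_neg_eq_self f volume
  simp only [hf, integral_neg] at h
  have htwice : (2 : ℝ) • ∫ x, f x = 0 := by
    rw [two_smul]
    nth_rewrite 1 [← h]
    exact neg_add_cancel _
  exact (smul_eq_zero.mp htwice).resolve_left two_ne_zero

section GaussianMoments

variable {b : ℝ}

theorem integrable_pow_mul_exp_neg_mul_sq (hb : 0 < b) (n : ℕ) :
    Integrable fun x : ℝ => x ^ n * exp (-b * x ^ 2) := by
  simpa [Real.rpow_natCast] using
    integrable_rpow_mul_exp_neg_mul_sq hb (by linarith [n.cast_nonneg (α := ℝ)] : (-1 : ℝ) < n)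

theorem integral_pow_mul_exp_neg_mul_sq_of_odd {n : ℕ} (hn : Odd n) :
    ∫ x : ℝ, x ^ n * exp (-b * x ^ 2) = 0 :=
  integral_eq_zero_of_odd fun x => by rw [hn.neg_pow, neg_sq, neg_mul]

theorem hasDerivAt_pow_succ_mul_exp_neg_mul_sq (n : ℕ) (x : ℝ) :
    HasDerivAt (fun x : ℝ => x ^ (n + 1) * exp (-b * x ^ 2))
      ((n + 1) * (x ^ n * exp (-b * x ^ 2)) - 2 * b * (x ^ (n + 2) * exp (-b * x ^ 2))) x := by
  have hpow : HasDerivAt (fun x : ℝ => x ^ (n + 1)) ((n + 1) * x ^ n) x := by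
    simpa using hasDerivAt_pow (n + 1) x
  have hexp : HasDerivAt (fun x : ℝ => exp (-b * x ^ 2)) (exp (-b * x ^ 2) * (-b * (2 * x))) x :=
    (by simpa using (hasDerivAt_pow 2 x).const_mul (-b) : HasDerivAt _ _ x).exp
  exact (hpow.mul hexp).congr_deriv (by ring)

theorem integral_pow_add_two_mul_exp_neg_mul_sq (hb : 0 < b) (n : ℕ) :
    ∫ x : ℝ, x ^ (n + 2) * exp (-b * x ^ 2)
      = (n + 1) / (2 * b) * ∫ x : ℝ, x ^ n * exp (-b * x ^ 2) := by
  have hn := (integrable_pow_mul_exp_neg_mul_sq hb n).const_mul ((n : ℝ) + 1)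
  have hn2 := (integrable_pow_mul_exp_neg_mul_sq hb (n + 2)).const_mul (2 * b)
  have hzero := integral_eq_zero_of_hasDerivAt_of_integrable
    (hasDerivAt_pow_succ_mul_exp_neg_mul_sq n) (hn.sub hn2)
    (integrable_pow_mul_exp_neg_mul_sq hb (n + 1))
  rw [integral_sub hn hn2, integral_const_mul, integral_const_mul, sub_eq_zero] at hzero
  rw [div_mul_eq_mul_div, eq_div_iff (by positivity)]
  linarith

theorem integral_pow_two_mul_mul_exp_neg_mul_sq (hb : 0 < b) (k : ℕ) :
    ∫ x : ℝ, x ^ (2 * k) * exp (-b * x ^ 2) = √(π / b) * (2 * k)! / (k ! * (4 * b) ^ k) := by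
  induction k with
  | zero => simpa using integral_gaussian b
  | succ k ih =>
    rw [Nat.mul_succ, integral_pow_add_two_mul_exp_neg_mul_sq hb, ih,
      Nat.factorial_succ (2 * k + 1), Nat.factorial_succ (2 * k), Nat.factorial_succ k]
    push_cast
    field_simp
    ring

theorem integral_pow_two_mul_mul_gaussian_normalized {h : ℝ} (hh : 0 < h) (k : ℕ) :
    (√(2 * π * h))⁻¹ * ∫ x : ℝ, x ^ (2 * k) * exp (-(2 * h)⁻¹ * x ^ 2)
      = (2 * k)! / k ! * (h / 2) ^ k := by
  have hsqrt : √(π / (2 * h)⁻¹) = √(2 * π * h) := by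
    rw [div_inv_eq_mul]
    ring_nf
  have hpos : 0 < √(2 * π * h) := by positivity
  have hfour : 4 * (2 * h)⁻¹ = (h / 2)⁻¹ := by field_simp; norm_num
  rw [integral_pow_two_mul_mul_exp_neg_mul_sq (by positivity), hsqrt, hfour, inv_pow]
  field_simp

theorem integral_exp_neg_mul_sq_mul_eval (hb : 0 < b) (p : ℝ[X]) {n : ℕ} (hn : p.natDegree < n) :
    ∫ x : ℝ, exp (-b * x ^ 2) * p.eval x
      = ∑ j ∈ Finset.range n, p.coeff j * ∫ x : ℝ, x ^ j * exp (-b * x ^ 2) := by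
  simp_rw [eval_eq_sum_range' hn, Finset.mul_sum, ← integral_const_mul]
  rw [← integral_finsetSum _ fun j _ => (integrable_pow_mul_exp_neg_mul_sq hb j).const_mul _]
  congr with x
  exact Finset.sum_congr rfl fun j _ => by ring

end GaussianMoments

/-- Wick's lemma in one variable.  For a real polynomial `O` and `ħ > 0`,
`(e^{(ħ/2) d²/dx²} O)(0)` (a finite sum since `O` is polynomial) equals the normalized
Gaussian average `(2πħ)^{-1/2} ∫ e^{-x²/(2ħ)} O(x) dx`. -/
theorem wick_lemma_one_variable (O : Polynomial ℝ) (h : ℝ) (hh : 0 < h) :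
    ∑ k ∈ Finset.range (O.natDegree + 1),
        (h / 2) ^ k / (Nat.factorial k : ℝ) *
          Polynomial.eval 0 ((fun q : Polynomial ℝ => Polynomial.derivative q)^[2 * k] O)
      = (Real.sqrt (2 * Real.pi * h))⁻¹ *
          ∫ x : ℝ, Real.exp (-x ^ 2 / (2 * h)) * O.eval x := by
  have hquad (x : ℝ) : -x ^ 2 / (2 * h) = -(2 * h)⁻¹ * x ^ 2 := by ring
  simp_rw [hquad]
  rw [integral_exp_neg_mul_sq_mul_eval (by positivity) O (n := 2 * (O.natDegree + 1)) (by omega),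
    Finset.sum_range_two_mul, Finset.mul_sum]
  refine Finset.sum_congr rfl fun k _ => ?_
  rw [integral_pow_mul_exp_neg_mul_sq_of_odd (odd_two_mul_add_one k), mul_zero, add_zero,
    mul_left_comm, integral_pow_two_mul_mul_gaussian_normalized hh, eval_zero_iterate_derivative]
  ring
end

section
/- Duhamel/Dyson expansion for matrices: for square matrices A, B over ℝ or ℂ and T ≥ 0, e^{T(A+B)} = Σ_{k=0}^{∞} ∫_{Δ_k(T)} e^{t₀A} B e^{t₁A} B ⋯ B e^{t_kA} dt₁⋯dt_k, where Δ_k(T) = {(t₀,…,t_k) : t_j ≥ 0, t₀+⋯+t_k = T} and the series converges absolutely in operator norm. -/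
/-!
Let `R_k(X, T)` (`dysonTerm X A B k T`) be the integral over the `k`-simplex of total time `T`
of `e^{t₀X} B e^{t₁A} B ⋯ B e^{t_kA}`, so that the `k`-th Dyson term is `R_k(A, T)` and
`R_0(A + B, T) = e^{T(A+B)}`. Integrating out `t₀` with Duhamel's formula
`e^{s(A+B)} - e^{sA} = ∫₀ˢ e^{(s-u)(A+B)} B e^{uA} du` gives
`R_{k+1}(A + B, T) = R_k(A + B, T) - R_k(A, T)`, hence
`e^{T(A+B)} = Σ_{k<n} R_k(A, T) + R_n(A + B, T)`. Integrating out `t_k` instead gives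
`R_{k+1}(X, T) = ∫₀ᵀ R_k(X, T - u) B e^{uA} du`, and by induction
`‖R_k(X, T)‖ ≤ C e^{TM} (C‖B‖T)^k / k!` whenever `‖X‖, ‖A‖ ≤ M`. So the terms are absolutely
summable and the remainder tends to `0`.
-/

open MeasureTheory NormedSpace Set Filter Topology
open scoped Nat

namespace Dyson

def simplex (k : ℕ) (T : ℝ) : Set (Fin k → ℝ) := {t | (∀ i, 0 ≤ t i) ∧ ∑ i, t i ≤ T}

lemma isClosed_simplex (k : ℕ) (T : ℝ) : IsClosed (simplex k T) := by
  have : simplex k T = (⋂ i, {t | 0 ≤ t i}) ∩ {t | ∑ i, t i ≤ T} := by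
    ext; simp [simplex]
  rw [this]
  exact (isClosed_iInter fun i => isClosed_le continuous_const (continuous_apply i)).inter
    (isClosed_le (continuous_finsetSum _ fun i _ => continuous_apply i) continuous_const)

lemma measurableSet_simplex (k : ℕ) (T : ℝ) : MeasurableSet (simplex k T) :=
  (isClosed_simplex k T).measurableSet

lemma isCompact_simplex (k : ℕ) (T : ℝ) : IsCompact (simplex k T) := by
  refine (isCompact_univ_pi fun _ => isCompact_Icc (a := 0) (b := T)).of_isClosed_subset
    (isClosed_simplex k T) fun t ⟨ht0, htT⟩ i _ => ⟨ht0 i, ?_⟩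
  exact (Finset.single_le_sum (fun j _ => ht0 j) (Finset.mem_univ i)).trans htT

lemma simplex_zero {T : ℝ} (hT : 0 ≤ T) : simplex 0 T = univ := by
  simp [simplex, hT]

lemma cons_mem_simplex {k : ℕ} {T u : ℝ} {t : Fin k → ℝ} :
    (Fin.cons u t : Fin (k + 1) → ℝ) ∈ simplex (k + 1) T ↔
      t ∈ simplex k T ∧ u ∈ Icc 0 (T - ∑ i, t i) := by
  simp only [simplex, mem_ofPred_eq, Fin.forall_fin_succ, Fin.cons_zero, Fin.cons_succ,
    Fin.sum_univ_succ, mem_Icc, le_sub_iff_add_le]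
  constructor
  · rintro ⟨⟨hu, ht⟩, hsum⟩
    exact ⟨⟨ht, by linarith⟩, hu, hsum⟩
  · rintro ⟨⟨ht, -⟩, hu, hsum⟩
    exact ⟨⟨hu, ht⟩, hsum⟩

lemma snoc_mem_simplex {k : ℕ} {T u : ℝ} {t : Fin k → ℝ} :
    (Fin.snoc t u : Fin (k + 1) → ℝ) ∈ simplex (k + 1) T ↔
      u ∈ Icc 0 T ∧ t ∈ simplex k (T - u) := by
  simp only [simplex, mem_ofPred_eq, Fin.forall_fin_succ', Fin.snoc_castSucc, Fin.snoc_last,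
    Fin.sum_univ_castSucc, mem_Icc, le_sub_iff_add_le]
  constructor
  · rintro ⟨⟨ht, hu⟩, hsum⟩
    exact ⟨⟨hu, by linarith [Finset.sum_nonneg fun i (_ : i ∈ Finset.univ) => ht i]⟩, ht, hsum⟩
  · rintro ⟨⟨hu, -⟩, ht, hsum⟩
    exact ⟨⟨ht, hu⟩, hsum⟩

section Fubini

variable {E : Type*} [NormedAddCommGroup E] {k : ℕ} (i : Fin (k + 1))
  {f : (Fin (k + 1) → ℝ) → E}

lemma integrable_comp_insertNth (hf : Integrable f) :
    Integrable (fun p : ℝ × (Fin k → ℝ) => f (i.insertNth p.1 p.2)) (volume.prod volume) :=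
  ((volume_preserving_piFinSuccAbove (fun _ => ℝ) i).symm.integrable_comp_emb
    (MeasurableEquiv.measurableEmbedding _)).2 hf

variable [NormedSpace ℝ E]

lemma integral_comp_insertNth :
    ∫ p : ℝ × (Fin k → ℝ), f (i.insertNth p.1 p.2) ∂(volume.prod volume) = ∫ t, f t :=
  (volume_preserving_piFinSuccAbove (fun _ => ℝ) i).symm.integral_comp' f

lemma integral_eq_integral_integral_insertNth (hf : Integrable f) :
    ∫ t, f t = ∫ u, ∫ t', f (i.insertNth u t') := by
  rw [← integral_comp_insertNth, integral_prod _ (integrable_comp_insertNth i hf)]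

lemma integral_eq_integral_integral_insertNth_swap (hf : Integrable f) :
    ∫ t, f t = ∫ t', ∫ u, f (i.insertNth u t') := by
  rw [← integral_comp_insertNth, integral_prod_symm _ (integrable_comp_insertNth i hf)]

end Fubini

lemma integral_sub_pow_div_factorial (T : ℝ) (k : ℕ) :
    ∫ u in (0)..T, (T - u) ^ k / k ! = T ^ (k + 1) / (k + 1)! := by
  rw [intervalIntegral.integral_div, intervalIntegral.integral_comp_sub_left (fun x => x ^ k),
    integral_pow, Nat.factorial_succ]
  push_cast
  field_simp
  ring

variable {𝔸 : Type*} [NormedRing 𝔸] [NormedAlgebra ℝ 𝔸]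

/-- `max ‖1‖ 1` rather than `1`: in a normed ring `‖1‖` may exceed `1`. -/
lemma norm_exp_le (x : 𝔸) : ‖exp x‖ ≤ max ‖(1 : 𝔸)‖ 1 * Real.exp ‖x‖ := by
  have hpow (n : ℕ) : ‖x ^ n‖ ≤ max ‖(1 : 𝔸)‖ 1 * ‖x‖ ^ n := by
    rcases n.eq_zero_or_pos with rfl | hn
    · simp
    · exact (norm_pow_le' x hn).trans
        (le_mul_of_one_le_left (pow_nonneg (norm_nonneg x) n) (le_max_right _ _))
  have hterm (n : ℕ) : ‖(n !⁻¹ : ℝ) • x ^ n‖ ≤ max ‖(1 : 𝔸)‖ 1 * (‖x‖ ^ n / n !) := by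
    rw [norm_smul, norm_inv, RCLike.norm_natCast]
    calc _ ≤ (n ! : ℝ)⁻¹ * (max ‖(1 : 𝔸)‖ 1 * ‖x‖ ^ n) := by gcongr; exact hpow n
      _ = _ := by ring
  rw [exp_eq_tsum ℝ, Real.exp_eq_exp_ℝ, exp_eq_tsum_div, ← tsum_mul_left]
  exact (norm_tsum_le_tsum_norm (norm_expSeries_summable' x)).trans
    ((norm_expSeries_summable' x).tsum_le_tsum hterm
      ((Real.summable_pow_div_factorial ‖x‖).mul_left _))

lemma norm_exp_smul_le (x : 𝔸) {s M : ℝ} (hs : 0 ≤ s) (hM : ‖x‖ ≤ M) :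
    ‖exp (s • x)‖ ≤ max ‖(1 : 𝔸)‖ 1 * Real.exp (s * M) := by
  refine (norm_exp_le _).trans ?_
  rw [norm_smul, Real.norm_of_nonneg hs]
  gcongr

noncomputable def dysonProduct (A B : 𝔸) {k : ℕ} (t : Fin k → ℝ) : 𝔸 :=
  (List.ofFn fun i => B * exp (t i • A)).prod

lemma dysonProduct_cons (A B : 𝔸) {k : ℕ} (u : ℝ) (t : Fin k → ℝ) :
    dysonProduct A B (Fin.cons u t : Fin (k + 1) → ℝ) = B * exp (u • A) * dysonProduct A B t := by
  simp [dysonProduct, List.ofFn_succ]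

lemma dysonProduct_snoc (A B : 𝔸) {k : ℕ} (t : Fin k → ℝ) (u : ℝ) :
    dysonProduct A B (Fin.snoc t u : Fin (k + 1) → ℝ) = dysonProduct A B t * (B * exp (u • A)) := by
  simp only [dysonProduct, List.ofFn_succ', List.prod_concat, Fin.snoc_castSucc, Fin.snoc_last]

noncomputable def dysonIntegrand (X A B : 𝔸) (k : ℕ) (T : ℝ) (t : Fin k → ℝ) : 𝔸 :=
  exp ((T - ∑ i, t i) • X) * dysonProduct A B t

noncomputable def dysonTerm (X A B : 𝔸) (k : ℕ) (T : ℝ) : 𝔸 :=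
  ∫ t in simplex k T, dysonIntegrand X A B k T t

lemma indicator_dysonIntegrand_snoc (X A B : 𝔸) {k : ℕ} (T u : ℝ) (t : Fin k → ℝ) :
    (simplex (k + 1) T).indicator (dysonIntegrand X A B (k + 1) T) (Fin.snoc t u) =
      (Icc 0 T).indicator (fun u =>
        (simplex k (T - u)).indicator (dysonIntegrand X A B k (T - u)) t * (B * exp (u • A)))
        u := by
  have hsum : ∑ i, (Fin.snoc t u : Fin (k + 1) → ℝ) i = ∑ i, t i + u := by
    simp [Fin.sum_univ_castSucc]
  by_cases hu : u ∈ Icc 0 T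
  · rw [indicator_of_mem hu]
    by_cases ht : t ∈ simplex k (T - u)
    · rw [indicator_of_mem (snoc_mem_simplex.2 ⟨hu, ht⟩), indicator_of_mem ht, dysonIntegrand,
        dysonIntegrand, dysonProduct_snoc, hsum, ← mul_assoc, sub_sub, add_comm u]
    · rw [indicator_of_notMem (fun h => ht (snoc_mem_simplex.1 h).2), indicator_of_notMem ht,
        zero_mul]
  · rw [indicator_of_notMem hu, indicator_of_notMem (fun h => hu (snoc_mem_simplex.1 h).1)]


lemma indicator_dysonIntegrand_cons (X A B : 𝔸) {k : ℕ} {T : ℝ} {t : Fin k → ℝ}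
    (ht : t ∈ simplex k T) (u : ℝ) :
    (simplex (k + 1) T).indicator (dysonIntegrand X A B (k + 1) T) (Fin.cons u t) =
      (Icc 0 (T - ∑ i, t i)).indicator
        (fun u => exp ((T - ∑ i, t i - u) • X) * (B * exp (u • A))) u * dysonProduct A B t := by
  have hsum : ∑ i, (Fin.cons u t : Fin (k + 1) → ℝ) i = u + ∑ i, t i := by
    simp [Fin.sum_univ_succ]
  by_cases hu : u ∈ Icc 0 (T - ∑ i, t i)
  · rw [indicator_of_mem (cons_mem_simplex.2 ⟨ht, hu⟩), indicator_of_mem hu, dysonIntegrand,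
      dysonProduct_cons, hsum, sub_sub, add_comm u, ← mul_assoc, ← mul_assoc]
  · rw [indicator_of_notMem hu, zero_mul,
      indicator_of_notMem (fun h => hu (cons_mem_simplex.1 h).2)]


variable [CompleteSpace 𝔸]

@[fun_prop]
lemma exp_continuous_real : Continuous (exp : 𝔸 → 𝔸) :=
  continuous_iff_continuousAt.2 fun x => (exp_analytic (𝕂 := ℝ) x).continuousAt

lemma integral_exp_mul_sub_mul_exp (X Y : 𝔸) (s : ℝ) :
    ∫ u in (0)..s, exp ((s - u) • X) * ((X - Y) * exp (u • Y)) = exp (s • X) - exp (s • Y) := by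
  have hderiv (u : ℝ) : HasDerivAt (fun u : ℝ => -(exp ((s - u) • X) * exp (u • Y)))
      (exp ((s - u) • X) * ((X - Y) * exp (u • Y))) u := by
    have hX := (hasDerivAt_exp_smul_const X (s - u)).scomp u ((hasDerivAt_id u).const_sub s)
    refine (hX.mul (hasDerivAt_exp_smul_const' (𝕂 := ℝ) Y u)).neg.congr_deriv ?_
    rw [neg_one_smul]
    noncomm_ring
  rw [intervalIntegral.integral_eq_sub_of_hasDerivAt (fun u _ => hderiv u)
    (Continuous.intervalIntegrable (by fun_prop) 0 s)]
  simp [exp_zero]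
  abel

lemma continuous_dysonProduct (A B : 𝔸) (k : ℕ) :
    Continuous fun t : Fin k → ℝ => dysonProduct A B t := by
  induction k with
  | zero => simpa [dysonProduct] using continuous_const
  | succ k ih =>
    simp only [dysonProduct, List.ofFn_succ, List.prod_cons]
    exact (continuous_const.mul (by fun_prop)).mul
      (ih.comp (continuous_pi fun i => continuous_apply i.succ))

lemma integrableOn_dysonIntegrand (X A B : 𝔸) (k : ℕ) (T : ℝ) :
    IntegrableOn (dysonIntegrand X A B k T) (simplex k T) := by
  refine ContinuousOn.integrableOn_compact (isCompact_simplex k T) (Continuous.continuousOn ?_)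
  exact Continuous.mul (by fun_prop) (continuous_dysonProduct A B k)

lemma integrable_indicator_dysonIntegrand (X A B : 𝔸) (k : ℕ) (T : ℝ) :
    Integrable ((simplex k T).indicator (dysonIntegrand X A B k T)) :=
  (integrableOn_dysonIntegrand X A B k T).integrable_indicator (measurableSet_simplex k T)

lemma dysonTerm_zero (X A B : 𝔸) {T : ℝ} (hT : 0 ≤ T) : dysonTerm X A B 0 T = exp (T • X) := by
  simp [dysonTerm, dysonIntegrand, dysonProduct, simplex_zero hT, measureReal_def, volume_pi]

lemma dysonTerm_succ (X A B : 𝔸) (k : ℕ) (T : ℝ) :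
    dysonTerm X A B (k + 1) T =
      ∫ u in Icc 0 T, dysonTerm X A B k (T - u) * (B * exp (u • A)) := by
  rw [dysonTerm, ← integral_indicator (measurableSet_simplex _ _),
    integral_eq_integral_integral_insertNth (Fin.last k)
      (integrable_indicator_dysonIntegrand X A B _ T),
    ← integral_indicator measurableSet_Icc]
  congr 1 with u
  simp only [Fin.insertNth_last', indicator_dysonIntegrand_snoc]
  by_cases hu : u ∈ Icc 0 T
  · simp only [indicator_of_mem hu]
    rw [integral_mul_const_of_integrable (integrable_indicator_dysonIntegrand X A B k _),
      integral_indicator (measurableSet_simplex _ _), dysonTerm]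
  · simp [indicator_of_notMem hu]

lemma dysonTerm_add_succ (A B : 𝔸) (k : ℕ) (T : ℝ) :
    dysonTerm (A + B) A B (k + 1) T = dysonTerm (A + B) A B k T - dysonTerm A A B k T := by
  rw [dysonTerm, ← integral_indicator (measurableSet_simplex _ _),
    integral_eq_integral_integral_insertNth_swap 0
      (integrable_indicator_dysonIntegrand (A + B) A B _ T),
    dysonTerm, dysonTerm, ← integral_sub (integrableOn_dysonIntegrand _ A B k T)
      (integrableOn_dysonIntegrand A A B k T), ← integral_indicator (measurableSet_simplex _ _)]
  congr 1 with t
  simp only [Fin.insertNth_zero']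
  by_cases ht : t ∈ simplex k T
  · have hduhamel := integral_exp_mul_sub_mul_exp (A + B) A (T - ∑ i, t i)
    rw [add_sub_cancel_left, intervalIntegral.integral_of_le (sub_nonneg.2 ht.2),
      ← integral_Icc_eq_integral_Ioc] at hduhamel
    simp only [indicator_dysonIntegrand_cons _ _ _ ht, indicator_of_mem ht, dysonIntegrand,
      ← sub_mul]
    rw [integral_mul_const_of_integrable
        ((Continuous.integrableOn_Icc (by fun_prop)).integrable_indicator measurableSet_Icc),
      integral_indicator measurableSet_Icc, hduhamel]
  · simp [indicator_of_notMem ht, indicator_of_notMem (fun h => ht (cons_mem_simplex.1 h).1)]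

lemma sum_dysonTerm_add_dysonTerm (A B : 𝔸) {T : ℝ} (hT : 0 ≤ T) (n : ℕ) :
    ∑ k ∈ Finset.range n, dysonTerm A A B k T + dysonTerm (A + B) A B n T = exp (T • (A + B)) := by
  induction n with
  | zero => simp [dysonTerm_zero _ _ _ hT]
  | succ n ih => rw [Finset.sum_range_succ, dysonTerm_add_succ, ← ih]; abel

lemma norm_dysonTerm_le {X A B : 𝔸} {C M : ℝ}
    (hX : ∀ s, 0 ≤ s → ‖exp (s • X)‖ ≤ C * Real.exp (s * M))
    (hA : ∀ s, 0 ≤ s → ‖exp (s • A)‖ ≤ C * Real.exp (s * M)) (k : ℕ) {T : ℝ} (hT : 0 ≤ T) :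
    ‖dysonTerm X A B k T‖ ≤ C * Real.exp (T * M) * (C * ‖B‖) ^ k * (T ^ k / k !) := by
  induction k generalizing T with
  | zero => simpa [dysonTerm_zero X A B hT] using hX T hT
  | succ k ih =>
    have hC : 0 ≤ C := by simpa using (norm_nonneg _).trans (hA 0 le_rfl)
    have hbound : ∀ u ∈ Ioc 0 T, ‖dysonTerm X A B k (T - u) * (B * exp (u • A))‖ ≤
        C * Real.exp (T * M) * (C * ‖B‖) ^ (k + 1) * ((T - u) ^ k / k !) := by
      rintro u ⟨hu0, huT⟩
      calc _ ≤ ‖dysonTerm X A B k (T - u)‖ * (‖B‖ * ‖exp (u • A)‖) :=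
            (norm_mul_le _ _).trans (by gcongr; exact norm_mul_le _ _)
        _ ≤ C * Real.exp ((T - u) * M) * (C * ‖B‖) ^ k * ((T - u) ^ k / k !) *
              (‖B‖ * (C * Real.exp (u * M))) := by
            gcongr
            exacts [ih (sub_nonneg.2 huT), hA u hu0.le]
        _ = _ := by rw [show T * M = (T - u) * M + u * M by ring, Real.exp_add]; ring
    rw [dysonTerm_succ, integral_Icc_eq_integral_Ioc, ← intervalIntegral.integral_of_le hT]
    refine (intervalIntegral.norm_integral_le_of_norm_le hT (ae_of_all _ hbound)
      (Continuous.intervalIntegrable (by fun_prop) 0 T)).trans_eq ?_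
    rw [intervalIntegral.integral_const_mul, integral_sub_pow_div_factorial]

end Dyson

/-- the Duhamel/Dyson expansion
`e^{T(A+B)} = Σ_k ∫_{Δ_k(T)} e^{t₀A} B e^{t₁A} B ⋯ B e^{t_kA} dt₁⋯dt_k`
(with `t₀ = T - (t₁+⋯+t_k)`), the series converging absolutely in norm. -/
theorem duhamel_dyson_expansion
    {𝔸 : Type*} [NormedRing 𝔸] [NormedAlgebra ℂ 𝔸] [CompleteSpace 𝔸]
    (A B : 𝔸) (T : ℝ) (hT : 0 ≤ T) :
    let term : ℕ → 𝔸 := fun k =>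
      ∫ t in {t : Fin k → ℝ | (∀ i, 0 ≤ t i) ∧ ∑ i, t i ≤ T},
        NormedSpace.exp ((T - ∑ i, t i) • A) *
          (List.ofFn fun i : Fin k => B * NormedSpace.exp (t i • A)).prod
    HasSum term (NormedSpace.exp (T • (A + B))) ∧
    Summable (fun k => ‖term k‖) := by
  intro term
  set C : ℝ := max ‖(1 : 𝔸)‖ 1
  set M : ℝ := max ‖A + B‖ ‖A‖
  have hA (s : ℝ) (hs : 0 ≤ s) := Dyson.norm_exp_smul_le A hs (le_max_right ‖A + B‖ ‖A‖)
  have hAB (s : ℝ) (hs : 0 ≤ s) := Dyson.norm_exp_smul_le (A + B) hs (le_max_left ‖A + B‖ ‖A‖)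
  have hbound : Summable fun k : ℕ => C * Real.exp (T * M) * (C * ‖B‖) ^ k * (T ^ k / k !) :=
    ((Real.summable_pow_div_factorial (C * ‖B‖ * T)).mul_left (C * Real.exp (T * M))).congr
      fun k => by rw [mul_pow]; ring
  have hterm : Summable fun k => ‖term k‖ :=
    hbound.of_nonneg_of_le (fun k => norm_nonneg _) fun k => Dyson.norm_dysonTerm_le hA hA k hT
  have hremainder : Tendsto (fun n => Dyson.dysonTerm (A + B) A B n T) atTop (𝓝 0) :=
    squeeze_zero_norm (fun n => Dyson.norm_dysonTerm_le hAB hA n hT) hbound.tendsto_atTop_zero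
  refine ⟨(hasSum_iff_tendsto_nat_of_summable_norm hterm).2 ?_, hterm⟩
  have hpartial (n : ℕ) : ∑ k ∈ Finset.range n, term k =
      NormedSpace.exp (T • (A + B)) - Dyson.dysonTerm (A + B) A B n T :=
    eq_sub_of_add_eq (Dyson.sum_dysonTerm_add_dysonTerm A B hT n)
  simpa [hpartial] using tendsto_const_nhds.sub hremainder
end
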